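/- Let 1 → ℤ → G̃ →^p G → 1 be a central extension with section σ : G → G̃ (p∘σ = id) whose associated 2-cocycle c(g,g') := σ(g)σ(g')σ(gg')⁻¹ ∈ ℤ satisfies |c(g,g')| ≤ 1 for all g, g'. Let S be a finite symmetric generating set of a subgroup Λ ≤ G, and equip Λ̃ := p⁻¹(Λ) with the generating set σ(S) ∪ {ε}, where ε generates the central ℤ. Then for every λ ∈ Λ, the word length satisfies |σ(λ)|_{Λ̃} ≤ 2|λ|_Λ. -/

import Mathlib

/-!
Write `λ` as a word `s₁ ⋯ sₙ` in `S` of minimal length `n`. Pulling one letter at a time out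
of `σ`, the cocycle gives `σ (s * w) = ε ^ (-k) * σ s * σ w` with `|k| ≤ 1`, so each letter
`s` costs the generator `σ s` plus at most one generator `ε ^ (±1)`, i.e. at most two letters.
-/

noncomputable def wordLength {G : Type*} [Group G] (S : Set G) (g : G) : ℕ :=
  sInf {n | ∃ l : List G, (∀ s ∈ l, s ∈ S) ∧ l.prod = g ∧ l.length = n}

theorem exists_list_length_eq_wordLength {G : Type*} [Group G] {S : Set G}
    (hS : ∀ s ∈ S, s⁻¹ ∈ S) {g : G} (hg : g ∈ Subgroup.closure S) :
    ∃ l : List G, (∀ s ∈ l, s ∈ S) ∧ l.prod = g ∧ l.length = wordLength S g := by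
  rw [← Subgroup.mem_toSubmonoid, Subgroup.closure_toSubmonoid] at hg
  obtain ⟨l, hlS, hl⟩ := Submonoid.exists_list_of_mem_closure hg
  have hlS' : ∀ s ∈ l, s ∈ S := fun s hs =>
    (hlS s hs).elim id fun hs' => inv_inv s ▸ hS _ (Set.mem_inv.mp hs')
  exact Nat.sInf_mem (s := {n | ∃ l : List G, (∀ s ∈ l, s ∈ S) ∧ l.prod = g ∧ l.length = n})
    ⟨l.length, l, hlS', hl, rfl⟩

theorem exists_list_prod_eq_zpow_of_abs_le_one {H : Type*} [Group H] (ε : H) {k : ℤ}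
    (hk : |k| ≤ 1) :
    ∃ l : List H, (∀ t ∈ l, t ∈ ({ε, ε⁻¹} : Set H)) ∧ l.prod = ε ^ k ∧ l.length ≤ 1 := by
  obtain ⟨hk₁, hk₂⟩ := abs_le.mp hk
  interval_cases k
  · exact ⟨[ε⁻¹], by simp, by simp, by simp⟩
  · exact ⟨[], by simp, by simp, by simp⟩
  · exact ⟨[ε], by simp, by simp, by simp⟩

theorem exists_list_prod_eq_section_list_prod {G H : Type*} [Group G] [Group H]
    (ε : H) (σ : G → H) (hσ1 : σ 1 = 1)
    (hcocycle : ∀ g g' : G, ∃ k : ℤ, |k| ≤ 1 ∧ σ g * σ g' = ε ^ k * σ (g * g'))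
    {S : Set G} {l : List G} (hl : ∀ s ∈ l, s ∈ S) :
    ∃ l' : List H, (∀ t ∈ l', t ∈ σ '' S ∪ {ε, ε⁻¹}) ∧
      l'.prod = σ l.prod ∧ l'.length ≤ 2 * l.length := by
  induction l with
  | nil => exact ⟨[], by simp, by simp [hσ1], by simp⟩
  | cons a l ih =>
    obtain ⟨l', hl'S, hl'prod, hl'len⟩ := ih fun s hs => hl s (List.mem_cons_of_mem a hs)
    obtain ⟨k, hk, hσa⟩ := hcocycle a l.prod
    obtain ⟨e, heS, heprod, helen⟩ :=
      exists_list_prod_eq_zpow_of_abs_le_one ε (k := -k) (by rwa [abs_neg])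
    refine ⟨e ++ σ a :: l', ?_, ?_, ?_⟩
    · simp only [List.mem_append, List.mem_cons]
      rintro t (ht | rfl | ht)
      · exact Or.inr (heS t ht)
      · exact Or.inl ⟨a, hl a List.mem_cons_self, rfl⟩
      · exact hl'S t ht
    · rw [List.prod_append, List.prod_cons, heprod, hl'prod, List.prod_cons, hσa, zpow_neg,
        inv_mul_cancel_left]
    · simp only [List.length_append, List.length_cons]
      omega

theorem stmt11_general {G Gt : Type*} [Group G] [Group Gt]
    (ε : Gt)
    (σ : G → Gt) (hσ1 : σ 1 = 1)
    (hcocycle : ∀ g g' : G, ∃ k : ℤ, |k| ≤ 1 ∧ σ g * σ g' = ε ^ k * σ (g * g'))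
    (S : Finset G) (hsymm : ∀ s ∈ S, s⁻¹ ∈ S)
    (lam : G) (hlam : lam ∈ Subgroup.closure (S : Set G)) :
    ∃ l : List Gt, (∀ t ∈ l, t ∈ (σ '' (S : Set G)) ∪ {ε, ε⁻¹}) ∧
      l.prod = σ lam ∧ l.length ≤ 2 * wordLength (S : Set G) lam := by
  obtain ⟨l, hlS, rfl, hlen⟩ := exists_list_length_eq_wordLength hsymm hlam
  obtain ⟨l', hl'S, hl'prod, hl'len⟩ := exists_list_prod_eq_section_list_prod ε σ hσ1 hcocycle hlS
  exact ⟨l', hl'S, hl'prod, hlen ▸ hl'len⟩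

/-- In a central extension `1 → ℤ → G̃ → G → 1` with a section `σ` whose 2-cocycle is
bounded by `1` in absolute value, one has `|σ(λ)|_{Λ̃} ≤ 2|λ|_Λ` for every `λ` in the
subgroup generated by a finite symmetric set `S`, where `Λ̃ = p⁻¹(Λ)` carries the
generating set `σ(S) ∪ {ε^{±1}}`. -/
theorem stmt11 {G Gt : Type*} [Group G] [Group Gt]
    (p : Gt →* G) (ε : Gt) (hεcentral : ∀ x : Gt, ε * x = x * ε)
    (hker : p.ker = Subgroup.zpowers ε)
    (σ : G → Gt) (hσ : ∀ g : G, p (σ g) = g) (hσ1 : σ 1 = 1)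
    (hcocycle : ∀ g g' : G, ∃ k : ℤ, |k| ≤ 1 ∧ σ g * σ g' = ε ^ k * σ (g * g'))
    (S : Finset G) (hsymm : ∀ s ∈ S, s⁻¹ ∈ S)
    (lam : G) (hlam : lam ∈ Subgroup.closure (S : Set G)) :
    ∃ l : List Gt, (∀ t ∈ l, t ∈ (σ '' (S : Set G)) ∪ {ε, ε⁻¹}) ∧
      l.prod = σ lam ∧ l.length ≤ 2 * wordLength (S : Set G) lam :=
  stmt11_general ε σ hσ1 hcocycle S hsymm lam hlam
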